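/- Let Λ be a real inner product space and let g₀, g₁ : Λ → ℝ be twice differentiable with Hessians that are M-Lipschitz in operator norm. Fix λ₀ ∈ Λ and α > 0, and define λ₁ = λ₀ − α·∇g₀(λ₀), λ₂ = λ₁ − α·∇g₁(λ₁). Then the Reptile direction p = (1/α)·(λ₀ − λ₂) satisfies ‖p − (∇g₀(λ₀) + ∇g₁(λ₀) − α·(Hess g₁(λ₀)) (∇g₀(λ₀)))‖ ≤ (M/2)·α²·‖∇g₀(λ₀)‖². -/

import Mathlib

/-!
The Reptile direction equals `∇g₀(λ₀) + ∇g₁(λ₁)`, and `λ₁ - λ₀ = -α ∇g₀(λ₀)`, so its deviation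
from the transfer-corrected gradient is exactly the first-order Taylor remainder of `∇g₁` between
`λ₀` and `λ₁`. A derivative that is `M`-Lipschitz bounds that remainder by `M/2 · ‖λ₁ - λ₀‖²`.
-/

open Set in
/-- Comparing the remainder along the segment with `t ↦ M/2 · ‖y - x‖² t²` gives the sharp
constant `M/2`; the plain mean value inequality would only give `M`. -/
theorem norm_sub_sub_fderiv_apply_le_of_lipschitz {E F : Type*} [NormedAddCommGroup E]
    [NormedSpace ℝ E] [NormedAddCommGroup F] [NormedSpace ℝ F]
    {f : E → F} {f' : E → E →L[ℝ] F} {M : ℝ}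
    (hf : ∀ x, HasFDerivAt f (f' x) x) (hLip : ∀ u v, ‖f' u - f' v‖ ≤ M * ‖u - v‖) (x y : E) :
    ‖f y - f x - f' x (y - x)‖ ≤ M / 2 * ‖y - x‖ ^ 2 := by
  set v := y - x
  set φ : ℝ → F := fun t => f (x + t • v) - t • f' x v - f x
  have hφ : ∀ t : ℝ, HasDerivAt φ (f' (x + t • v) v - f' x v) t := by
    intro t
    have hline : HasDerivAt (fun t : ℝ => x + t • v) v t := by
      simpa using ((hasDerivAt_id t).smul_const v).const_add x
    have hlin : HasDerivAt (fun t : ℝ => t • f' x v) (f' x v) t := by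
      simpa using (hasDerivAt_id t).smul_const (f' x v)
    exact (((hf _).comp_hasDerivAt t hline).sub hlin).sub_const (f x)
  have hbound : ∀ t : ℝ, HasDerivAt (fun t => M / 2 * ‖v‖ ^ 2 * t ^ 2) (M * ‖v‖ ^ 2 * t) t := by
    intro t
    refine ((hasDerivAt_pow 2 t).const_mul (M / 2 * ‖v‖ ^ 2)).congr_deriv ?_
    ring
  have hφ'_le : ∀ t ∈ Ico (0 : ℝ) 1, ‖f' (x + t • v) v - f' x v‖ ≤ M * ‖v‖ ^ 2 * t := by
    intro t ht
    calc ‖f' (x + t • v) v - f' x v‖ ≤ ‖f' (x + t • v) - f' x‖ * ‖v‖ := by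
          simpa using (f' (x + t • v) - f' x).le_opNorm v
      _ ≤ M * ‖t • v‖ * ‖v‖ := by
          gcongr
          simpa using hLip (x + t • v) x
      _ = M * ‖v‖ ^ 2 * t := by
          rw [norm_smul, Real.norm_of_nonneg ht.1]
          ring
  have hφ1 := image_norm_le_of_norm_deriv_right_le_deriv_boundary
    (fun t _ => (hφ t).continuousAt.continuousWithinAt) (fun t _ => (hφ t).hasDerivWithinAt)
    (by simp [φ]) hbound hφ'_le (right_mem_Icc.2 zero_le_one)
  simp only [φ, one_smul, one_pow, mul_one, add_sub_cancel, v] at hφ1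
  rwa [sub_right_comm] at hφ1

theorem one_div_smul_sub_sub_smul_sub_smul {K V : Type*} [Field K] [AddCommGroup V] [Module K V]
    {α : K} (hα : α ≠ 0) (x u w : V) :
    (1 / α) • (x - (x - α • u - α • w)) = u + w := by
  rw [sub_sub, sub_sub_cancel, ← smul_add, smul_smul, one_div_mul_cancel hα, one_smul]

theorem reptile_direction_approx_general
    {Λ : Type*} [NormedAddCommGroup Λ] [InnerProductSpace ℝ Λ] [CompleteSpace Λ]
    (g₀ g₁ : Λ → ℝ) (H₁ : Λ → (Λ →L[ℝ] Λ)) (M : ℝ)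
    (hH₁ : ∀ x, HasFDerivAt (gradient g₁) (H₁ x) x)
    (hLip₁ : ∀ u v : Λ, ‖H₁ u - H₁ v‖ ≤ M * ‖u - v‖)
    (lam₀ : Λ) (α : ℝ) (hα : 0 < α) (lam₁ lam₂ p : Λ)
    (h₁ : lam₁ = lam₀ - α • gradient g₀ lam₀)
    (h₂ : lam₂ = lam₁ - α • gradient g₁ lam₁)
    (hp : p = (1 / α) • (lam₀ - lam₂)) :
    ‖p - (gradient g₀ lam₀ + gradient g₁ lam₀
        - α • (H₁ lam₀ (gradient g₀ lam₀)))‖ ≤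
      (M / 2) * α ^ 2 * ‖gradient g₀ lam₀‖ ^ 2 := by
  have hstep : lam₁ - lam₀ = (-α) • gradient g₀ lam₀ := by rw [h₁, neg_smul]; abel
  have hp' : p = gradient g₀ lam₀ + gradient g₁ lam₁ := by
    rw [hp, h₂, h₁, one_div_smul_sub_sub_smul_sub_smul hα.ne']
  calc ‖p - (gradient g₀ lam₀ + gradient g₁ lam₀ - α • (H₁ lam₀ (gradient g₀ lam₀)))‖
      = ‖gradient g₁ lam₁ - gradient g₁ lam₀ - H₁ lam₀ (lam₁ - lam₀)‖ := by
        rw [hp', hstep, map_smul]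
        congr 1
        module
    _ ≤ M / 2 * ‖lam₁ - lam₀‖ ^ 2 := norm_sub_sub_fderiv_apply_le_of_lipschitz hH₁ hLip₁ lam₀ lam₁
    _ = M / 2 * α ^ 2 * ‖gradient g₀ lam₀‖ ^ 2 := by
        rw [hstep, norm_smul, mul_pow, Real.norm_eq_abs, abs_neg, sq_abs, mul_assoc]

/-- The Reptile direction after two SGD steps approximates, up to an `O(α²)`
Taylor error, the gradient step `∇g₀(λ₀) + ∇g₁(λ₀) − α·Hess g₁(λ₀) ∇g₀(λ₀)`. -/
theorem reptile_direction_approx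
    {Λ : Type*} [NormedAddCommGroup Λ] [InnerProductSpace ℝ Λ] [CompleteSpace Λ]
    (g₀ g₁ : Λ → ℝ) (H₀ H₁ : Λ → (Λ →L[ℝ] Λ)) (M : ℝ)
    (hH₀ : ∀ x, HasFDerivAt (gradient g₀) (H₀ x) x)
    (hH₁ : ∀ x, HasFDerivAt (gradient g₁) (H₁ x) x)
    (hLip₀ : ∀ u v : Λ, ‖H₀ u - H₀ v‖ ≤ M * ‖u - v‖)
    (hLip₁ : ∀ u v : Λ, ‖H₁ u - H₁ v‖ ≤ M * ‖u - v‖)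
    (lam₀ : Λ) (α : ℝ) (hα : 0 < α) (lam₁ lam₂ p : Λ)
    (h₁ : lam₁ = lam₀ - α • gradient g₀ lam₀)
    (h₂ : lam₂ = lam₁ - α • gradient g₁ lam₁)
    (hp : p = (1 / α) • (lam₀ - lam₂)) :
    ‖p - (gradient g₀ lam₀ + gradient g₁ lam₀
        - α • (H₁ lam₀ (gradient g₀ lam₀)))‖ ≤
      (M / 2) * α ^ 2 * ‖gradient g₀ lam₀‖ ^ 2 :=
  reptile_direction_approx_general g₀ g₁ H₁ M hH₁ hLip₁ lam₀ α hα lam₁ lam₂ p h₁ h₂ hp
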